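/- Let (X,d) be an unbounded metric space and p∈X. Then the condition lim_{k→1⁺} limsup_{r→∞} diam(A(p,r,k))/r = limsup_{r→∞} diam(S(p,r))/r = 0 holds if and only if for every scaling sequence r̃ the labeling ρ⁰ : V(G_{X,r̃}) → ℝ⁺ is an injective function. -/

import Mathlib

open Filter Topology
open scoped Classical

/-- An unbounded metric space. -/
def UnboundedSpace (X : Type*) [MetricSpace X] : Prop :=
  ¬ Bornology.IsBounded (Set.univ : Set X)

/-- A scaling sequence: positive reals tending to infinity. -/
def ScalingSeq (r : ℕ → ℝ) : Prop :=
  (∀ n, 0 < r n) ∧ Filter.Tendsto r Filter.atTop Filter.atTop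

/-- Two sequences are mutually stable w.r.t. `r` if `d(x_n, y_n)/r_n` has a finite limit. -/
def MutuallyStable {X : Type*} [MetricSpace X] (r : ℕ → ℝ) (x y : ℕ → X) : Prop :=
  ∃ L : ℝ, Filter.Tendsto (fun n => dist (x n) (y n) / r n) Filter.atTop (nhds L)

/-- `Seq(X, r̃)`: sequences going to infinity such that `d(x_n, p)/r_n` has a finite limit. -/
def SeqInf {X : Type*} [MetricSpace X] (r : ℕ → ℝ) (p : X) : Set (ℕ → X) :=
  {x | Filter.Tendsto (fun n => dist (x n) p) Filter.atTop Filter.atTop ∧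
    ∃ L : ℝ, Filter.Tendsto (fun n => dist (x n) p / r n) Filter.atTop (nhds L)}

/-- The relation `x̃ ≡ ỹ`, i.e. `d(x_n, y_n)/r_n → 0`. -/
def EquivSeq {X : Type*} [MetricSpace X] (r : ℕ → ℝ) (x y : ℕ → X) : Prop :=
  Filter.Tendsto (fun n => dist (x n) (y n) / r n) Filter.atTop (nhds 0)

/-- The `≡`-equivalence class of `x` inside `Seq(X, r̃)`. -/
def classOf {X : Type*} [MetricSpace X] (r : ℕ → ℝ) (p : X) (x : ℕ → X) : Set (ℕ → X) :=
  {y | y ∈ SeqInf r p ∧ EquivSeq r x y}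

/-- The vertex set of the cluster graph `G_{X, r̃}`: all `≡`-classes of `Seq(X, r̃)`. -/
def VertexSet {X : Type*} [MetricSpace X] (r : ℕ → ℝ) (p : X) : Set (Set (ℕ → X)) :=
  {v | ∃ x ∈ SeqInf r p, v = classOf r p x}

/-- Adjacency in the cluster graph `G_{X, r̃}`: distinct classes whose representatives
are mutually stable. -/
def AdjacentCl {X : Type*} [MetricSpace X] (r : ℕ → ℝ) (p : X) (u v : Set (ℕ → X)) : Prop :=
  u ∈ VertexSet r p ∧ v ∈ VertexSet r p ∧ u ≠ v ∧
    ∀ x ∈ u, ∀ y ∈ v, MutuallyStable r x y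

/-- The weight `ρ_X` on the cluster graph: for an edge `{u,v}` it is the (unique) limit
`lim d(x_n, y_n)/r_n` for representatives. -/
noncomputable def rhoX {X : Type*} [MetricSpace X] (r : ℕ → ℝ) (u v : Set (ℕ → X)) : ℝ :=
  sSup {L : ℝ | ∃ x ∈ u, ∃ y ∈ v,
    Filter.Tendsto (fun n => dist (x n) (y n) / r n) Filter.atTop (nhds L)}

/-- The root `ν₀ = X̃⁰_{∞,r̃}`: sequences with `d(z_n,p) → ∞` and `d(z_n,p)/r_n → 0`. -/
def rootClass {X : Type*} [MetricSpace X] (r : ℕ → ℝ) (p : X) : Set (ℕ → X) :=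
  {z | Filter.Tendsto (fun n => dist (z n) p) Filter.atTop Filter.atTop ∧
    Filter.Tendsto (fun n => dist (z n) p / r n) Filter.atTop (nhds 0)}

/-- The labeling `ρ⁰` of vertices: `ρ⁰(v) = lim d(x_n,p)/r_n` for `x̃ ∈ v`. -/
noncomputable def rho0 {X : Type*} [MetricSpace X] (r : ℕ → ℝ) (p : X)
    (v : Set (ℕ → X)) : ℝ :=
  sSup {L : ℝ | ∃ x ∈ v, Filter.Tendsto (fun n => dist (x n) p / r n) Filter.atTop (nhds L)}

/-- A self-stable family: a subset of `Seq(X, r̃)` any two of whose members are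
mutually stable. -/
def SelfStable {X : Type*} [MetricSpace X] (r : ℕ → ℝ) (p : X) (F : Set (ℕ → X)) : Prop :=
  F ⊆ SeqInf r p ∧ ∀ x ∈ F, ∀ y ∈ F, MutuallyStable r x y

/-- A maximal self-stable set `X̃_{∞, r̃}`. -/
def MaxSelfStable {X : Type*} [MetricSpace X] (r : ℕ → ℝ) (p : X) (F : Set (ℕ → X)) : Prop :=
  SelfStable r p F ∧ ∀ F', SelfStable r p F' → F ⊆ F' → F = F'

/-- The pretangent space `Ω^X_{∞,r̃}` attached to a maximal self-stable set `F`: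
the set of `≡`-classes of members of `F`. -/
def PretangentCl {X : Type*} [MetricSpace X] (r : ℕ → ℝ) (F : Set (ℕ → X)) :
    Set (Set (ℕ → X)) :=
  {v | ∃ x ∈ F, v = {y | y ∈ F ∧ EquivSeq r x y}}

/-- A clique in the cluster graph `G_{X, r̃}`. -/
def IsCliqueCl {X : Type*} [MetricSpace X] (r : ℕ → ℝ) (p : X)
    (C : Set (Set (ℕ → X))) : Prop :=
  C ⊆ VertexSet r p ∧ ∀ u ∈ C, ∀ v ∈ C, u ≠ v → AdjacentCl r p u v

/-- The function `F_n` of Theorem t2.2.1. -/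
noncomputable def FnFun {X : Type*} [MetricSpace X] (p : X) (n : ℕ) (x : Fin n → X) : ℝ :=
  if ∀ k, x k = p then 0
  else (⨅ k, dist (x k) p) *
      (∏ k : Fin n, ∏ l : Fin n, if k < l then dist (x k) (x l) else 1) /
      (⨆ k, dist (x k) p) ^ (n * (n - 1) / 2 + 1)

/-- The condition that `F_n(x_1, …, x_n) → 0` as `max_k d(x_k, p) → ∞`. -/
def CondF {X : Type*} [MetricSpace X] (p : X) (n : ℕ) : Prop :=
  ∀ ε : ℝ, 0 < ε → ∃ M : ℝ, ∀ x : Fin n → X,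
    M ≤ (⨆ k, dist (x k) p) → |FnFun p n x| < ε

/-- The annulus `A(p, R, k) = {x : R/k ≤ d(x,p) ≤ R·k}`; `A(p, R, 1)` is the sphere
`S(p, R)`. -/
def annulus {X : Type*} [MetricSpace X] (p : X) (R k : ℝ) : Set X :=
  {x | R / k ≤ dist x p ∧ dist x p ≤ R * k}

/-- `Ψ(k) = limsup_{R → ∞} diam(A(p, R, k)) / R` (with `diam ∅ = 0`). -/
noncomputable def Psi {X : Type*} [MetricSpace X] (p : X) (k : ℝ) : ℝ :=
  Filter.limsup (fun R : ℝ => Metric.diam (annulus p R k) / R) Filter.atTop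

/-- The condition `lim_{k→1⁺} limsup_{R→∞} diam(A(p,R,k))/R
= limsup_{R→∞} diam(S(p,R))/R = 0`. -/
def CondA {X : Type*} [MetricSpace X] (p : X) : Prop :=
  Filter.Tendsto (fun k => Psi p k) (nhdsWithin 1 (Set.Ioi 1)) (nhds 0) ∧ Psi p 1 = 0

/-!
Ψ is monotone in `k`, so the annulus condition says exactly that `Ψ(k)` can be made arbitrarily
small with `k > 1`. In that case two sequences with the same limit `L > 0` of `d(x_n, p)/r_n`
eventually lie in one thin annulus `A(p, L r_n, k)`, so their distance is `o(r_n)`; for `L = 0`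
the triangle inequality through `p` suffices. Hence `ρ⁰` determines the vertex. Conversely, if
the condition fails, there are `ε > 0`, `k_n → 1⁺` and radii `R_n → ∞` with points
`x_n, y_n ∈ A(p, R_n, k_n)` at distance `> ε R_n`; for the scaling sequence `(R_n)` the classes
of `(x_n)` and `(y_n)` are distinct vertices, both labelled `1`.
-/

theorem exists_lt_dist_of_lt_diam {α : Type*} [PseudoMetricSpace α] {s : Set α} {c : ℝ}
    (hc : 0 ≤ c) (h : c < Metric.diam s) : ∃ a ∈ s, ∃ b ∈ s, c < dist a b := by
  by_contra! hs
  exact h.not_ge (Metric.diam_le_of_forall_dist_le hc hs)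

section Annulus

variable {X : Type*} [MetricSpace X]

theorem annulus_subset_closedBall (p : X) (R k : ℝ) :
    annulus p R k ⊆ Metric.closedBall p (R * k) :=
  fun _ hx => Metric.mem_closedBall.2 hx.2

theorem isBounded_annulus (p : X) (R k : ℝ) : Bornology.IsBounded (annulus p R k) :=
  Metric.isBounded_closedBall.subset (annulus_subset_closedBall p R k)

theorem annulus_subset_annulus (p : X) {R k k' : ℝ} (hR : 0 ≤ R) (hk : 0 < k) (hkk' : k ≤ k') :
    annulus p R k ⊆ annulus p R k' := fun _ hx =>
  ⟨(div_le_div_of_nonneg_left hR hk hkk').trans hx.1,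
    hx.2.trans (mul_le_mul_of_nonneg_left hkk' hR)⟩

theorem mem_annulus_mul_of_div_mem_Icc {p z : X} {L k r : ℝ} (hr : 0 < r)
    (h : dist z p / r ∈ Set.Icc (L / k) (L * k)) : z ∈ annulus p (L * r) k :=
  ⟨by rw [mul_div_right_comm]; exact (le_div_iff₀ hr).1 h.1,
    by rw [mul_right_comm]; exact (div_le_iff₀ hr).1 h.2⟩

theorem tendsto_dist_div_of_mem_annulus {p : X} {R k : ℕ → ℝ} {z : ℕ → X} (hR : ∀ n, 0 < R n)
    (hk : Tendsto k atTop (𝓝 1)) (hz : ∀ n, z n ∈ annulus p (R n) (k n)) :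
    Tendsto (fun n => dist (z n) p / R n) atTop (𝓝 1) := by
  refine tendsto_of_tendsto_of_tendsto_of_le_of_le (by simpa using hk.inv₀ one_ne_zero) hk
    (fun n => ?_) (fun n => ?_)
  · rw [le_div_iff₀ (hR n), inv_mul_eq_div]
    exact (hz n).1
  · rw [div_le_iff₀ (hR n), mul_comm]
    exact (hz n).2

theorem isBoundedUnder_diam_annulus_div (p : X) {k : ℝ} (hk : 0 ≤ k) :
    IsBoundedUnder (· ≤ ·) atTop (fun R : ℝ => Metric.diam (annulus p R k) / R) := by
  refine ⟨2 * k, eventually_map.2 ?_⟩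
  filter_upwards [eventually_gt_atTop 0] with R hR
  have hdiam := Metric.diam_le_of_subset_closedBall (by positivity) (annulus_subset_closedBall p R k)
  rw [div_le_iff₀ hR]
  linarith

theorem isCoboundedUnder_diam_annulus_div (p : X) (k : ℝ) :
    IsCoboundedUnder (· ≤ ·) atTop (fun R : ℝ => Metric.diam (annulus p R k) / R) :=
  isCoboundedUnder_le_of_eventually_le _
    ((eventually_ge_atTop 0).mono fun _ hR => div_nonneg Metric.diam_nonneg hR)

theorem psi_nonneg (p : X) {k : ℝ} (hk : 0 ≤ k) : 0 ≤ Psi p k :=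
  le_limsup_of_frequently_le
    ((eventually_ge_atTop 0).mono fun _ hR => div_nonneg Metric.diam_nonneg hR).frequently
    (isBoundedUnder_diam_annulus_div p hk)

theorem psi_mono (p : X) {k k' : ℝ} (hk : 0 < k) (hkk' : k ≤ k') : Psi p k ≤ Psi p k' :=
  limsup_le_limsup
    ((eventually_ge_atTop 0).mono fun R hR => div_le_div_of_nonneg_right
      (Metric.diam_mono (annulus_subset_annulus p hR hk hkk') (isBounded_annulus p R k')) hR)
    (isCoboundedUnder_diam_annulus_div p k) (isBoundedUnder_diam_annulus_div p (hk.le.trans hkk'))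

theorem condA_iff_forall_exists_psi_lt (p : X) : CondA p ↔ ∀ ε > 0, ∃ k > 1, Psi p k < ε := by
  refine ⟨fun hA ε hε => ?_, fun h => ?_⟩
  · obtain ⟨k, hk, hk1⟩ := ((hA.1.eventually (gt_mem_nhds hε)).and self_mem_nhdsWithin).exists
    exact ⟨k, hk1, hk⟩
  have hPsi1 : Psi p 1 = 0 := by
    refine le_antisymm (le_of_forall_pos_lt_add fun ε hε => ?_) (psi_nonneg p zero_le_one)
    obtain ⟨k, hk1, hk⟩ := h ε hε
    simpa using (psi_mono p one_pos hk1.le).trans_lt hk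
  refine ⟨tendsto_order.2 ⟨fun a ha => ?_, fun a ha => ?_⟩, hPsi1⟩
  · filter_upwards [self_mem_nhdsWithin] with k hk
    exact ha.trans_le (psi_nonneg p (zero_le_one.trans (Set.mem_Ioi.1 hk).le))
  · obtain ⟨k₀, hk₀, hk₀a⟩ := h a ha
    filter_upwards [Ioo_mem_nhdsGT hk₀] with k hk
    exact (psi_mono p (zero_lt_one.trans hk.1) hk.2.le).trans_lt hk₀a

end Annulus

section ClusterGraph

variable {X : Type*} [MetricSpace X]

theorem equivSeq_refl (r : ℕ → ℝ) (x : ℕ → X) : EquivSeq r x x := by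
  simp [EquivSeq]

theorem EquivSeq.symm {r : ℕ → ℝ} {x y : ℕ → X} (h : EquivSeq r x y) : EquivSeq r y x := by
  simpa only [EquivSeq, dist_comm] using h

theorem EquivSeq.trans {r : ℕ → ℝ} (hr : ∀ n, 0 < r n) {x y z : ℕ → X}
    (hxy : EquivSeq r x y) (hyz : EquivSeq r y z) : EquivSeq r x z := by
  refine squeeze_zero (fun n => div_nonneg dist_nonneg (hr n).le) (fun n => ?_)
    (by simpa using hxy.add hyz)
  rw [← add_div]
  exact div_le_div_of_nonneg_right (dist_triangle _ _ _) (hr n).le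

theorem EquivSeq.tendsto_dist_div {r : ℕ → ℝ} (hr : ∀ n, 0 < r n) {p : X} {x y : ℕ → X} {L : ℝ}
    (hxy : EquivSeq r x y) (hx : Tendsto (fun n => dist (x n) p / r n) atTop (𝓝 L)) :
    Tendsto (fun n => dist (y n) p / r n) atTop (𝓝 L) := by
  refine tendsto_of_tendsto_of_dist hx (squeeze_zero (fun _ => dist_nonneg) (fun n => ?_) hxy)
  rw [Real.dist_eq, ← sub_div, abs_div, abs_of_pos (hr n)]
  exact div_le_div_of_nonneg_right (abs_dist_sub_le _ _ _) (hr n).le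

theorem mem_seqInf_of_tendsto {r : ℕ → ℝ} (hr : ScalingSeq r) {p : X} {x : ℕ → X} {L : ℝ}
    (hL : 0 < L) (h : Tendsto (fun n => dist (x n) p / r n) atTop (𝓝 L)) : x ∈ SeqInf r p :=
  ⟨(h.pos_mul_atTop hL hr.2).congr fun n => div_mul_cancel₀ _ (hr.1 n).ne', L, h⟩

theorem classOf_eq_iff {r : ℕ → ℝ} (hr : ∀ n, 0 < r n) {p : X} {x y : ℕ → X}
    (hy : y ∈ SeqInf r p) : classOf r p x = classOf r p y ↔ EquivSeq r x y := by
  refine ⟨fun h => ?_, fun h => Set.ext fun z => ?_⟩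
  · have hy' : y ∈ classOf r p x := h ▸ ⟨hy, equivSeq_refl r y⟩
    exact hy'.2
  · exact ⟨fun hz => ⟨hz.1, h.symm.trans hr hz.2⟩, fun hz => ⟨hz.1, h.trans hr hz.2⟩⟩

theorem rho0_classOf {r : ℕ → ℝ} (hr : ∀ n, 0 < r n) {p : X} {x : ℕ → X} {L : ℝ}
    (hx : x ∈ SeqInf r p) (hL : Tendsto (fun n => dist (x n) p / r n) atTop (𝓝 L)) :
    rho0 r p (classOf r p x) = L := by
  have hlimits : {L' : ℝ | ∃ y ∈ classOf r p x,
      Tendsto (fun n => dist (y n) p / r n) atTop (𝓝 L')} = {L} := by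
    ext L'
    refine ⟨fun ⟨y, hy, hyL'⟩ => tendsto_nhds_unique hyL' (hy.2.tendsto_dist_div hr hL), ?_⟩
    rintro rfl
    exact ⟨x, ⟨hx, equivSeq_refl r x⟩, hL⟩
  rw [rho0, hlimits, csSup_singleton]

theorem injOn_rho0_iff {r : ℕ → ℝ} (hr : ∀ n, 0 < r n) (p : X) :
    Set.InjOn (rho0 r p) (VertexSet r p) ↔
      ∀ x ∈ SeqInf r p, ∀ y ∈ SeqInf r p, ∀ L : ℝ,
        Tendsto (fun n => dist (x n) p / r n) atTop (𝓝 L) →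
        Tendsto (fun n => dist (y n) p / r n) atTop (𝓝 L) → EquivSeq r x y := by
  refine ⟨fun h x hx y hy L hxL hyL => ?_, ?_⟩
  · refine (classOf_eq_iff hr hy).1 (h ⟨x, hx, rfl⟩ ⟨y, hy, rfl⟩ ?_)
    rw [rho0_classOf hr hx hxL, rho0_classOf hr hy hyL]
  · rintro h _ ⟨x, hx, rfl⟩ _ ⟨y, hy, rfl⟩ hxy
    obtain ⟨L, hxL⟩ := hx.2
    obtain ⟨M, hyM⟩ := hy.2
    rw [rho0_classOf hr hx hxL, rho0_classOf hr hy hyM] at hxy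
    exact (classOf_eq_iff hr hy).2 (h x hx y hy L hxL (hxy ▸ hyM))

theorem equivSeq_of_tendsto_of_forall_exists_psi_lt {p : X}
    (hΨ : ∀ ε > 0, ∃ k > 1, Psi p k < ε) {r : ℕ → ℝ} (hr : ScalingSeq r) {x y : ℕ → X} {L : ℝ}
    (hx : Tendsto (fun n => dist (x n) p / r n) atTop (𝓝 L))
    (hy : Tendsto (fun n => dist (y n) p / r n) atTop (𝓝 L)) : EquivSeq r x y := by
  rcases (ge_of_tendsto' hx fun n => div_nonneg dist_nonneg (hr.1 n).le).eq_or_lt with rfl | hL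
  · refine squeeze_zero (fun n => div_nonneg dist_nonneg (hr.1 n).le) (fun n => ?_)
      (by simpa using hx.add hy)
    rw [← add_div]
    exact div_le_div_of_nonneg_right (dist_triangle_right _ _ _) (hr.1 n).le
  refine Metric.tendsto_nhds.2 fun ε hε => ?_
  obtain ⟨k, hk1, hk⟩ := hΨ (ε / L) (div_pos hε hL)
  have hdiam : ∀ᶠ n in atTop, Metric.diam (annulus p (L * r n) k) / (L * r n) < ε / L :=
    (hr.2.const_mul_atTop hL).eventually
      (eventually_lt_of_limsup_lt hk (isBoundedUnder_diam_annulus_div p (by linarith)))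
  have hIoo : Set.Ioo (L / k) (L * k) ∈ 𝓝 L :=
    Ioo_mem_nhds (div_lt_self hL hk1) (lt_mul_of_one_lt_right hL hk1)
  filter_upwards [hx.eventually hIoo, hy.eventually hIoo, hdiam] with n hxn hyn hdn
  have hrn := hr.1 n
  have hxy := Metric.dist_le_diam_of_mem (isBounded_annulus p _ k)
    (mem_annulus_mul_of_div_mem_Icc hrn (Set.Ioo_subset_Icc_self hxn))
    (mem_annulus_mul_of_div_mem_Icc hrn (Set.Ioo_subset_Icc_self hyn))
  rw [div_lt_iff₀ (by positivity), div_mul_eq_mul_div, mul_left_comm,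
    mul_div_cancel_left₀ _ hL.ne'] at hdn
  rw [dist_zero_right, Real.norm_of_nonneg (by positivity), div_lt_iff₀ hrn]
  exact hxy.trans_lt hdn

theorem exists_psi_lt_of_forall_equivSeq {p : X}
    (h : ∀ r : ℕ → ℝ, ScalingSeq r → ∀ x ∈ SeqInf r p, ∀ y ∈ SeqInf r p,
      Tendsto (fun n => dist (x n) p / r n) atTop (𝓝 1) →
      Tendsto (fun n => dist (y n) p / r n) atTop (𝓝 1) → EquivSeq r x y) :
    ∀ ε > 0, ∃ k > 1, Psi p k < ε := by
  by_contra! hbad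
  obtain ⟨ε, hε, hbad⟩ := hbad
  obtain ⟨k, hk1, hk⟩ : ∃ k : ℕ → ℝ, (∀ n, 1 < k n) ∧ Tendsto k atTop (𝓝 1) :=
    ⟨fun n => 1 + 1 / ((n : ℝ) + 1), fun n => lt_add_of_pos_right 1 (by positivity),
      by simpa using tendsto_one_div_add_atTop_nhds_zero_nat.const_add (1 : ℝ)⟩
  have hwide : ∀ n : ℕ, ∃ R : ℝ, (n : ℝ) + 1 ≤ R ∧
      ε / 2 * R < Metric.diam (annulus p R (k n)) := by
    intro n
    obtain ⟨R, hRn, hR⟩ := (frequently_lt_of_lt_limsup (isCoboundedUnder_diam_annulus_div p (k n))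
      ((half_lt_self hε).trans_le (hbad (k n) (hk1 n)))).forall_exists_of_atTop ((n : ℝ) + 1)
    exact ⟨R, hRn, (lt_div_iff₀ (by linarith)).1 hR⟩
  choose R hRn hRdiam using hwide
  have hRpos : ∀ n, 0 < R n := fun n => by linarith [hRn n, (n.cast_nonneg : (0 : ℝ) ≤ n)]
  have hRscal : ScalingSeq R := ⟨hRpos, tendsto_atTop_mono hRn
    (tendsto_atTop_add_const_right _ 1 tendsto_natCast_atTop_atTop)⟩
  choose x hx y hy hxy using fun n => exists_lt_dist_of_lt_diam
    (mul_pos (half_pos hε) (hRpos n)).le (hRdiam n)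
  have hxL := tendsto_dist_div_of_mem_annulus hRpos hk hx
  have hyL := tendsto_dist_div_of_mem_annulus hRpos hk hy
  have hequiv := h R hRscal x (mem_seqInf_of_tendsto hRscal one_pos hxL)
    y (mem_seqInf_of_tendsto hRscal one_pos hyL) hxL hyL
  obtain ⟨n, hn⟩ := (hequiv.eventually (gt_mem_nhds (half_pos hε))).exists
  exact hn.not_gt ((lt_div_iff₀ (hRpos n)).2 (hxy n))

end ClusterGraph

theorem condA_iff_rho0_injective_general {X : Type*} [MetricSpace X]
    (p : X) :
    CondA p ↔
      ∀ r : ℕ → ℝ, ScalingSeq r → Set.InjOn (rho0 r p) (VertexSet r p) := by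
  rw [condA_iff_forall_exists_psi_lt]
  refine ⟨fun hΨ r hr => ?_, fun h => exists_psi_lt_of_forall_equivSeq ?_⟩
  · exact (injOn_rho0_iff hr.1 p).2 fun x _ y _ L hx hy =>
      equivSeq_of_tendsto_of_forall_exists_psi_lt hΨ hr hx hy
  · exact fun r hr x hx y hy => (injOn_rho0_iff hr.1 p).1 (h r hr) x hx y hy 1

/-- Lemma l2.2.4, first part. The annulus/sphere condition holds iff
the labeling `ρ⁰` is injective on `V(G_{X,r̃})` for every scaling sequence `r̃`. -/
theorem condA_iff_rho0_injective {X : Type*} [MetricSpace X]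
    (hX : UnboundedSpace X) (p : X) :
    CondA p ↔
      ∀ r : ℕ → ℝ, ScalingSeq r → Set.InjOn (rho0 r p) (VertexSet r p) :=
  condA_iff_rho0_injective_general p
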